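/- arXiv:2410.21208 — 3 statements merged into one kernel-verified Lean document; each statement's English description precedes it below -/
import Mathlib

section
/- Let r : M → ℝ be a bounded continuous function along a complete flow X^t with m := min r and M' := max r, and fix T > 0, ε > 0. Define S_t(p) = exp(∫_0^t [ε + (1/T)∫_0^T r(X^{u+τ} p) dτ] du) and let ||X^t_*|| satisfy ln ||X^t_*||(p) = ∫_0^t r(X^τ p) dτ. Then ln(||X^t_*||/S_t) = −εt + ∫_0^T ((T−τ)/T)(r(X^τ p) − r(X^{t+τ} p)) dτ, and in particular |ln(||X^t_*||/S_t) + εt| ≤ (T/2)(M' − m), so ||X^t_*||/S_t → 0 exponentially as t → +∞. -/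
open intervalIntegral Real
set_option maxHeartbeats 1000000

/- STATEMENT 7: Along a fixed flow line, with ρ := r ∘ X^·, m ≤ ρ ≤ M', T, ε > 0,
N t := ||X^t_*|| = exp(∫_0^t ρ) and S_t := exp(∫_0^t [ε + (1/T)∫_0^T ρ(u+τ)dτ] du), one has
ln(N t/S t) = −εt + ∫_0^T ((T−τ)/T)(ρ(τ) − ρ(t+τ))dτ, |ln(N t/S t) + εt| ≤ (T/2)(M'−m),
and N t/S t → 0 as t → ∞. -/
theorem stmt7 (ρ : ℝ → ℝ) (hρ : Continuous ρ)
    (m M' T ε : ℝ) (hT : 0 < T) (hε : 0 < ε)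
    (hm : ∀ t, m ≤ ρ t) (hM : ∀ t, ρ t ≤ M')
    (N S : ℝ → ℝ)
    (hN : ∀ t, N t = Real.exp (∫ τ in (0:ℝ)..t, ρ τ))
    (hS : ∀ t, S t = Real.exp
      (∫ u in (0:ℝ)..t, (ε + (1 / T) * ∫ τ in (0:ℝ)..T, ρ (u + τ)))) :
    (∀ t, Real.log (N t / S t)
        = -ε * t + ∫ τ in (0:ℝ)..T, ((T - τ) / T) * (ρ τ - ρ (t + τ))) ∧
    (∀ t, |Real.log (N t / S t) + ε * t| ≤ (T / 2) * (M' - m)) ∧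
    Filter.Tendsto (fun t => N t / S t) Filter.atTop (nhds 0) := by
  set F : ℝ → ℝ := fun t => ∫ τ in (0:ℝ)..t, ρ τ with hFdef
  have hFd : ∀ x : ℝ, HasDerivAt F (ρ x) x := fun x =>
    (hρ.integral_hasStrictDerivAt 0 x).hasDerivAt
  have hFdiff : Differentiable ℝ F := fun x => (hFd x).differentiableAt
  have hFc : Continuous F := hFdiff.continuous
  have hF0 : F 0 = 0 := intervalIntegral.integral_same
  -- inner integral
  have hinner : ∀ u : ℝ, (∫ τ in (0:ℝ)..T, ρ (u + τ)) = F (u + T) - F u := by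
    intro u
    rw [intervalIntegral.integral_comp_add_left ρ u]
    simp only [add_zero]
    rw [hFdef]
    exact (intervalIntegral.integral_interval_sub_left
      (hρ.intervalIntegrable 0 (u + T)) (hρ.intervalIntegrable 0 u)).symm
  -- log of S
  have hlogS : ∀ t, Real.log (S t)
      = ε * t + (1 / T) * ((∫ u in T..(t + T), F u) - ∫ u in (0:ℝ)..t, F u) := by
    intro t
    rw [hS, Real.log_exp]
    have hcong : (∫ u in (0:ℝ)..t, (ε + (1 / T) * ∫ τ in (0:ℝ)..T, ρ (u + τ)))
        = ∫ u in (0:ℝ)..t, (ε + (1 / T) * (F (u + T) - F u)) := by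
      apply intervalIntegral.integral_congr
      intro u _
      dsimp only
      rw [hinner u]
    rw [hcong]
    have hint1 : IntervalIntegrable (fun u => (1 / T) * (F (u + T) - F u)) MeasureTheory.volume 0 t :=
      (Continuous.intervalIntegrable (by fun_prop) 0 t)
    rw [intervalIntegral.integral_add (intervalIntegrable_const) hint1,
      intervalIntegral.integral_const, intervalIntegral.integral_const_mul,
      intervalIntegral.integral_sub
        (Continuous.intervalIntegrable (by fun_prop) 0 t)
        (hFc.intervalIntegrable 0 t)]
    rw [intervalIntegral.integral_comp_add_right F T]
    simp [mul_comm]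
  -- integration by parts on the RHS
  have hparts : ∀ t : ℝ, (∫ τ in (0:ℝ)..T, ((T - τ) / T) * (ρ τ - ρ (t + τ)))
      = F t + (1 / T) * ((∫ τ in (0:ℝ)..T, F τ) - ∫ τ in t..(t + T), F τ) := by
    intro t
    have hv : ∀ x : ℝ, HasDerivAt (fun τ => F τ - F (t + τ)) (ρ x - ρ (t + x)) x := by
      intro x
      have h1 : HasDerivAt (fun τ => F (t + τ)) (ρ (t + x)) x := by
        have := (hFd (t + x)).comp x ((hasDerivAt_id x).const_add t)
        rw [mul_one] at this
        exact this
      exact (hFd x).sub h1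
    have hu : ∀ x : ℝ, HasDerivAt (fun τ => (T - τ) / T) (-(1 / T)) x := by
      intro x
      have := ((hasDerivAt_const x T).sub (hasDerivAt_id x)).div_const T
      simpa [neg_div] using this
    have hibp := intervalIntegral.integral_mul_deriv_eq_deriv_mul
      (u := fun τ => (T - τ) / T) (v := fun τ => F τ - F (t + τ))
      (u' := fun _ => -(1 / T)) (v' := fun τ => ρ τ - ρ (t + τ))
      (a := 0) (b := T)
      (fun x _ => hu x) (fun x _ => hv x)
      (intervalIntegrable_const)
      (Continuous.intervalIntegrable (by fun_prop) 0 T)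
    have h2 : (∫ x in (0:ℝ)..T, -(1 / T) * (F x - F (t + x)))
        = -(1 / T) * ((∫ τ in (0:ℝ)..T, F τ) - ∫ τ in (0:ℝ)..T, F (t + τ)) := by
      rw [intervalIntegral.integral_const_mul,
        intervalIntegral.integral_sub (hFc.intervalIntegrable 0 T)
          (Continuous.intervalIntegrable (by fun_prop) 0 T)]
    have hTT : (T - T) / T = 0 := by simp
    have h00 : (T - 0) / T = 1 := by field_simp; ring
    beta_reduce at hibp
    rw [hibp, hTT, h00, h2, intervalIntegral.integral_comp_add_left F t, hF0]
    simp only [add_zero]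
    ring
  -- Chasles
  have hChasles : ∀ t : ℝ, (∫ u in (0:ℝ)..t, F u) + (∫ u in t..(t + T), F u)
      = (∫ u in (0:ℝ)..T, F u) + ∫ u in T..(t + T), F u := by
    intro t
    rw [intervalIntegral.integral_add_adjacent_intervals
        (hFc.intervalIntegrable 0 t) (hFc.intervalIntegrable t (t + T)),
      intervalIntegral.integral_add_adjacent_intervals
        (hFc.intervalIntegrable 0 T) (hFc.intervalIntegrable T (t + T))]
  have hNS : ∀ t, Real.log (N t / S t) = F t - Real.log (S t) := by
    intro t
    have hSne : S t ≠ 0 := by rw [hS]; exact Real.exp_ne_zero _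
    rw [hN, Real.log_div (Real.exp_ne_zero _) hSne, Real.log_exp]
  -- Part 1
  have part1 : ∀ t, Real.log (N t / S t)
      = -ε * t + ∫ τ in (0:ℝ)..T, ((T - τ) / T) * (ρ τ - ρ (t + τ)) := by
    intro t
    have key : (∫ u in T..(t + T), F u) - (∫ u in (0:ℝ)..t, F u)
        = (∫ u in t..(t + T), F u) - (∫ u in (0:ℝ)..T, F u) := by
      linarith [hChasles t]
    rw [hNS, hlogS t, hparts t, key]
    ring
  have part2 : ∀ t, |Real.log (N t / S t) + ε * t| ≤ (T / 2) * (M' - m) := by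
    intro t
    have heq : Real.log (N t / S t) + ε * t
        = ∫ τ in (0:ℝ)..T, ((T - τ) / T) * (ρ τ - ρ (t + τ)) := by
      rw [part1 t]; ring
    rw [heq]
    have hcont : Continuous fun τ => ((T - τ) / T) * (ρ τ - ρ (t + τ)) := by fun_prop
    calc |∫ τ in (0:ℝ)..T, ((T - τ) / T) * (ρ τ - ρ (t + τ))|
        ≤ ∫ τ in (0:ℝ)..T, |((T - τ) / T) * (ρ τ - ρ (t + τ))| :=
          intervalIntegral.abs_integral_le_integral_abs hT.le
      _ ≤ ∫ τ in (0:ℝ)..T, ((T - τ) / T) * (M' - m) := by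
          apply intervalIntegral.integral_mono_on hT.le
            (hcont.abs.intervalIntegrable 0 T)
            (Continuous.intervalIntegrable (by fun_prop) 0 T)
          intro τ hτ
          rw [Set.mem_Icc] at hτ
          have h1 : 0 ≤ (T - τ) / T := div_nonneg (by linarith [hτ.2]) hT.le
          rw [abs_mul, abs_of_nonneg h1]
          apply mul_le_mul_of_nonneg_left _ h1
          rw [abs_sub_le_iff]
          constructor
          · linarith [hM τ, hm (t + τ)]
          · linarith [hm τ, hM (t + τ)]
      _ = (T / 2) * (M' - m) := by
          rw [intervalIntegral.integral_mul_const, intervalIntegral.integral_div,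
            intervalIntegral.integral_sub intervalIntegrable_const
              intervalIntegral.intervalIntegrable_id,
            intervalIntegral.integral_const, integral_id]
          field_simp
          ring
  refine ⟨part1, part2, ?_⟩
  have hpos : ∀ t, 0 < N t / S t := by
    intro t
    rw [hN, hS]
    exact div_pos (Real.exp_pos _) (Real.exp_pos _)
  have hlog : Filter.Tendsto (fun t => Real.log (N t / S t)) Filter.atTop Filter.atBot := by
    have hub : ∀ t, Real.log (N t / S t) ≤ (T / 2) * (M' - m) - ε * t := by
      intro t
      have h := le_abs_self (Real.log (N t / S t) + ε * t)
      linarith [part2 t]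
    have htend : Filter.Tendsto (fun t : ℝ => (T / 2) * (M' - m) - ε * t)
        Filter.atTop Filter.atBot := by
      have h1 : Filter.Tendsto (fun t : ℝ => ε * t) Filter.atTop Filter.atTop :=
        Filter.Tendsto.const_mul_atTop hε Filter.tendsto_id
      have h2 : Filter.Tendsto (fun t : ℝ => -(ε * t)) Filter.atTop Filter.atBot :=
        Filter.tendsto_neg_atTop_atBot.comp h1
      simpa [sub_eq_add_neg] using Filter.tendsto_atBot_add_const_left Filter.atTop
        ((T / 2) * (M' - m)) h2
    exact Filter.tendsto_atBot_mono hub htend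
  have hrw : (fun t => N t / S t) = fun t => Real.exp (Real.log (N t / S t)) := by
    funext t; rw [Real.exp_log (hpos t)]
  rw [hrw]
  exact Real.tendsto_exp_atBot.comp hlog
end

section
/- Let r, r̄, h, r_τ be as in the strongly adapted convexity setup (X·ln h = r̄ − r, h > 0, r_τ = ((1−τ)r + τh r̄)/((1−τ)+τh)). If r² + X·r > −r and r̄² + X·r̄ > −r̄ pointwise, then r_τ² + X·r_τ > −r_τ pointwise for all τ ∈ [0,1]. -/
/-!
With weights `a = 1 - τ` and `b = τ h` we have `r_τ = (a r + b r̄) / (a + b)` and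
`X·ln (b / a) = r̄ - r`. The Leibniz rule then gives
`(a + b) (r_τ² + X·r_τ + r_τ) = a (r² + X·r + r) + b (r̄² + X·r̄ + r̄)`,
a nonnegative combination, with positive total weight, of two positive quantities.
-/

namespace Derivation

variable {R A : Type*} [CommRing R] [CommRing A] [Algebra R A] (D : Derivation R A A)

/-- `hw` is `D (ln (b / a)) = s - r` with the denominators cleared. -/
theorem sq_mul_riccati_weighted_mean {a b r s x : A} (hx : x * (a + b) = a * r + b * s)
    (hw : a * D b - b * D a = a * b * (s - r)) :
    (a + b) ^ 2 * (x ^ 2 + D x + x) =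
      (a + b) * (a * (r ^ 2 + D r + r) + b * (s ^ 2 + D s + s)) := by
  have hDx : (a + b) * D x = a * D r + b * D s + r * D a + s * D b - x * (D a + D b) := by
    have := congrArg D hx
    simp only [leibniz, map_add, smul_eq_mul] at this
    linear_combination this
  linear_combination (a + b) * hDx + ((a + b) * x + a * r + b * s + (a + b) - D a - D b) * hx +
    (s - r) * hw

end Derivation

theorem pos_of_sq_mul_eq_weighted_sum {a b u v y : ℝ} (ha : 0 ≤ a) (hb : 0 ≤ b) (hab : 0 < a + b)
    (hu : 0 < u) (hv : 0 < v) (h : (a + b) ^ 2 * y = (a + b) * (a * u + b * v)) : 0 < y := by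
  have hy : (a + b) * y = a * u + b * v := mul_left_cancel₀ hab.ne' (by linear_combination h)
  have hsum : 0 < a * u + b * v := calc
    0 < (a + b) * min u v := mul_pos hab (lt_min hu hv)
    _ ≤ a * u + b * v := by
      nlinarith [mul_le_mul_of_nonneg_left (min_le_left u v) ha,
        mul_le_mul_of_nonneg_left (min_le_right u v) hb]
  exact pos_of_mul_pos_right (hy ▸ hsum) hab.le

theorem stmt11 {M : Type*}
    (D : (M → ℝ) →ₗ[ℝ] (M → ℝ))
    (leibniz : ∀ f g : M → ℝ, D (f * g) = f * D g + D f * g)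
    (r rb h : M → ℝ) (hh : ∀ p, 0 < h p)
    (hln : D h = h * (rb - r))
    (τ : ℝ) (hτ : τ ∈ Set.Icc (0:ℝ) 1)
    (rτ : M → ℝ)
    (hrτ : ∀ p, rτ p = ((1 - τ) * r p + τ * h p * rb p) / ((1 - τ) + τ * h p))
    (hstr : ∀ p, -(r p) < (r p) ^ 2 + D r p)
    (hstrb : ∀ p, -(rb p) < (rb p) ^ 2 + D rb p) :
    ∀ p, -(rτ p) < (rτ p) ^ 2 + D rτ p := by
  obtain ⟨hτ0, hτ1⟩ := hτ
  let X : Derivation ℝ (M → ℝ) (M → ℝ) :=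
    .mk' D fun f g => by rw [leibniz, smul_eq_mul, smul_eq_mul, mul_comm (D f)]
  let a : M → ℝ := fun _ => 1 - τ
  let b : M → ℝ := τ • h
  have ha : ∀ p, 0 ≤ a p := fun _ => sub_nonneg.mpr hτ1
  have hb : ∀ p, 0 ≤ b p := fun p => mul_nonneg hτ0 (hh p).le
  have hab : ∀ p, 0 < a p + b p := fun p => by
    rcases hτ1.eq_or_lt with rfl | hlt
    · simpa [a, b] using hh p
    · exact add_pos_of_pos_of_nonneg (sub_pos.mpr hlt) (hb p)
  have hx : rτ * (a + b) = a * r + b * rb := funext fun p => by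
    have hne : 1 - τ + τ * h p ≠ 0 := (hab p).ne'
    simp only [a, b, Pi.mul_apply, Pi.add_apply, Pi.smul_apply, smul_eq_mul, hrτ p]
    field_simp
  have hw : a * X b - b * X a = a * b * (rb - r) := by
    have hDa : X a = 0 := X.map_algebraMap (1 - τ)
    have hDb : X b = τ • (h * (rb - r)) := by simp only [X, b, map_smul, Derivation.coe_mk', hln]
    funext p
    simp only [hDa, hDb, a, b, Pi.mul_apply, Pi.sub_apply, Pi.smul_apply, smul_eq_mul,
      Pi.zero_apply, mul_zero]
    ring
  intro p
  have key := congrFun (X.sq_mul_riccati_weighted_mean hx hw) p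
  simp only [Pi.mul_apply, Pi.add_apply, Pi.pow_apply, X, Derivation.coe_mk'] at key
  have := pos_of_sq_mul_eq_weighted_sum (ha p) (hb p) (hab p)
    (by linarith [hstr p]) (by linarith [hstrb p]) key
  linarith
end

section
/- Let X be a vector field tangent to ker α_+ for a contact form α_+, and write α_+ = α_u − α_s with L_X α_u = r_u α_u, L_X α_s = r_s α_s. Assume r_u > 0 > r_s. Then L_X α_+ = r_u α_u − r_s α_s, and ι_X((L_X α_+) ∧ d(L_X α_+)) = −([r_u + X·ln r_u] − [r_s + X·ln(−r_s)]) (r_u α_u) ∧ (−r_s α_s) up to the sign convention; consequently L_X α_+ is a negative contact form (relative to the orientation where α_s ∧ α_u is positive) if and only if [r_u + X·ln r_u] > [r_s + X·ln(−r_s)] everywhere. -/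
/-!
Both `α_u` and `α_s` are eigenforms of `L_X`, so `β = L_X α_+ = r_u α_u - r_s α_s` and, by the
Leibniz rule, `L_X β = (X·r_u + r_u²) α_u - (X·r_s + r_s²) α_s`. Since the wedge product is
alternating, `β ∧ L_X β` is the determinant of this coefficient matrix times `α_u ∧ α_s`, and that
determinant is `(ρ_u - ρ_s) r_u r_s`, whose sign is opposite to that of `ρ_u - ρ_s`.
-/

theorem LinearMap.IsAlt.map_sub_smul_sub_smul {R M N : Type*} [CommRing R] [AddCommGroup M]
    [Module R M] [AddCommGroup N] [Module R N] {W : M →ₗ[R] M →ₗ[R] N} (hW : W.IsAlt)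
    (x y : M) (a b c d : R) :
    W (a • x - b • y) (c • x - d • y) = (a * d - b * c) • W y x := by
  simp only [map_sub, map_smul, LinearMap.sub_apply, LinearMap.smul_apply, hW.self_eq_zero,
    smul_zero, ← hW.neg y x]
  module

theorem map_smul_of_leibniz_of_eq_smul {A Ω : Type*} [Semiring A] [AddCommMonoid Ω] [Module A Ω]
    {L : Ω → Ω} {D : A → A}
    (leibniz : ∀ (f : A) (ω : Ω), L (f • ω) = D f • ω + f • L ω)
    {ω : Ω} {r : A} (hω : L ω = r • ω) (f : A) :
    L (f • ω) = (D f + f * r) • ω := by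
  rw [leibniz, hω, smul_smul, add_smul]

theorem sub_mul_neg_iff_of_neg {α : Type*} [Ring α] [LinearOrder α] [IsStrictOrderedRing α]
    {a b c : α} (hc : c < 0) : (a - b) * c < 0 ↔ b < a :=
  ⟨fun h => sub_pos.mp (pos_of_mul_neg_left h hc.le),
    fun h => mul_neg_of_pos_of_neg (sub_pos.mpr h) hc⟩

theorem stmt14 {M Ω1 Ω2 : Type*} [AddCommGroup Ω1] [Module ℝ Ω1] [Module (M → ℝ) Ω1] [IsScalarTower ℝ (M → ℝ) Ω1]
    [AddCommGroup Ω2] [Module (M → ℝ) Ω2]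
    (W : Ω1 →ₗ[M → ℝ] Ω1 →ₗ[M → ℝ] Ω2)       -- wedge product
    (hW : ∀ ω, W ω ω = 0)                       -- alternating
    (L : Ω1 →ₗ[ℝ] Ω1)                           -- Lie derivative L_X
    (D : (M → ℝ) →ₗ[ℝ] (M → ℝ))                 -- derivative along X
    (leibniz : ∀ (f : M → ℝ) (ω : Ω1), L (f • ω) = D f • ω + f • L ω)
    (αu αs : Ω1) (ru rs : M → ℝ)
    (hru : ∀ p, 0 < ru p) (hrs : ∀ p, rs p < 0)
    (hLu : L αu = ru • αu) (hLs : L αs = rs • αs)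
    (ρu ρs : M → ℝ)
    (hρu : ∀ p, ρu p = ru p + D ru p / ru p)    -- r_u + X·ln r_u
    (hρs : ∀ p, ρs p = rs p + D rs p / rs p)    -- r_s + X·ln(−r_s)
    (ι : Ω2)
    -- ι_X(β ∧ dβ) = −β ∧ L_X β for β := L_X(α_u − α_s):
    (hι : ι = - W (L (αu - αs)) (L (L (αu - αs)))) :
    L (αu - αs) = ru • αu - rs • αs ∧
    ι = ((ρu - ρs) * (ru * rs)) • W αs αu ∧
    ((∀ p, ((ρu - ρs) * (ru * rs)) p < 0) ↔ ∀ p, ρs p < ρu p) := by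
  have hβ : L (αu - αs) = ru • αu - rs • αs := by rw [map_sub, hLu, hLs]
  have hLβ : L (L (αu - αs)) = (D ru + ru * ru) • αu - (D rs + rs * rs) • αs := by
    rw [hβ, map_sub, map_smul_of_leibniz_of_eq_smul leibniz hLu,
      map_smul_of_leibniz_of_eq_smul leibniz hLs]
  have hcoef : (ρu - ρs) * (ru * rs) = rs * (D ru + ru * ru) - ru * (D rs + rs * rs) := by
    funext p
    simp only [Pi.mul_apply, Pi.sub_apply, Pi.add_apply, hρu, hρs]
    field_simp [(hru p).ne', (hrs p).ne]
    ring
  refine ⟨hβ, ?_, forall_congr' fun p =>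
    sub_mul_neg_iff_of_neg (mul_neg_of_pos_of_neg (hru p) (hrs p))⟩
  rw [hι, hLβ, hβ, LinearMap.IsAlt.map_sub_smul_sub_smul hW, hcoef, ← neg_smul, neg_sub]
end
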